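/- arXiv:2402.15409 — 5 statements merged into one kernel-verified Lean document; each statement's English description precedes it below -/
import Mathlib

section
/- Let v be a vector in R^n with ℓ∞ norm at most 1. Consider a procedure repeated T times: at each step, if ‖v‖₂ ≤ k‖v‖∞, choose a set S ⊆ [n] containing all indices i with |v_i| ≥ ‖v‖∞/2 and halve v_i for all i ∈ S; otherwise choose an arbitrary set S and halve v_i for all i ∈ S. Then after T steps, the final vector v satisfies either ‖v‖₂ > (k/2)‖v‖∞ or ‖v‖₂ ≤ 2^{-T} k. -/
/-!
Call `a` flat when `‖a‖₂ ≤ (k/2)‖a‖∞`. Undoing a halving step at most doubles every coordinate,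
so if a step outputs a flat vector `b`, its input `a` satisfies `‖a‖₂ ≤ 2‖b‖₂ ≤ k‖b‖∞ ≤ k‖a‖∞`:
the step was forced to halve every coordinate of size at least `‖a‖∞/2`, hence `‖b‖∞ ≤ ‖a‖∞/2`,
and `a` is flat too. So if the final vector is flat, all earlier ones are, every step halved the
sup norm, and `‖v_T‖₂ ≤ (k/2)‖v_T‖∞ ≤ (k/2)2^{-T}`.
-/

noncomputable def l2norm {n : ℕ} (v : Fin n → ℝ) : ℝ := Real.sqrt (∑ i, v i ^ 2)
noncomputable def linfnorm {n : ℕ} (v : Fin n → ℝ) : ℝ := ⨆ i, |v i|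

section

variable {n : ℕ}

lemma linfnorm_nonneg (a : Fin n → ℝ) : 0 ≤ linfnorm a :=
  Real.iSup_nonneg fun _ => abs_nonneg _

lemma abs_le_linfnorm (a : Fin n → ℝ) (i : Fin n) : |a i| ≤ linfnorm a :=
  le_ciSup (f := fun j => |a j|) (Set.finite_range _).bddAbove i

lemma linfnorm_le_of_forall_abs_le {a : Fin n → ℝ} {c : ℝ} (hc : 0 ≤ c) (h : ∀ i, |a i| ≤ c) :
    linfnorm a ≤ c :=
  Real.iSup_le h hc

lemma l2norm_le_mul_of_forall_abs_le {a b : Fin n → ℝ} {c : ℝ} (hc : 0 ≤ c)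
    (h : ∀ i, |a i| ≤ c * |b i|) : l2norm a ≤ c * l2norm b := by
  have hsq : ∑ i, a i ^ 2 ≤ c ^ 2 * ∑ i, b i ^ 2 := by
    rw [Finset.mul_sum]
    refine Finset.sum_le_sum fun i _ => ?_
    rw [← sq_abs (a i), ← sq_abs (b i), ← mul_pow]
    exact pow_le_pow_left₀ (abs_nonneg _) (h i) 2
  calc l2norm a ≤ Real.sqrt (c ^ 2 * ∑ i, b i ^ 2) := Real.sqrt_le_sqrt hsq
    _ = c * l2norm b := by rw [Real.sqrt_mul (sq_nonneg c), Real.sqrt_sq hc, l2norm]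

noncomputable def halve (S : Finset (Fin n)) (a : Fin n → ℝ) : Fin n → ℝ :=
  fun i => if i ∈ S then a i / 2 else a i

def IsFlat (k : ℝ) (a : Fin n → ℝ) : Prop :=
  l2norm a ≤ k / 2 * linfnorm a

variable {S : Finset (Fin n)} {a : Fin n → ℝ}

lemma abs_halve_le (i : Fin n) : |halve S a i| ≤ |a i| := by
  unfold halve
  split_ifs
  · rw [abs_div, abs_two]; linarith [abs_nonneg (a i)]
  · rfl

lemma abs_le_two_mul_abs_halve (i : Fin n) : |a i| ≤ 2 * |halve S a i| := by
  unfold halve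
  split_ifs
  · rw [abs_div, abs_two]; linarith
  · linarith [abs_nonneg (a i)]

lemma l2norm_le_two_mul_l2norm_halve : l2norm a ≤ 2 * l2norm (halve S a) :=
  l2norm_le_mul_of_forall_abs_le zero_le_two abs_le_two_mul_abs_halve

lemma linfnorm_halve_le : linfnorm (halve S a) ≤ linfnorm a :=
  linfnorm_le_of_forall_abs_le (linfnorm_nonneg a) fun i =>
    (abs_halve_le i).trans (abs_le_linfnorm a i)

lemma linfnorm_halve_le_half (hS : ∀ i, linfnorm a / 2 ≤ |a i| → i ∈ S) :
    linfnorm (halve S a) ≤ linfnorm a / 2 := by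
  refine linfnorm_le_of_forall_abs_le (by linarith [linfnorm_nonneg a]) fun i => ?_
  unfold halve
  split_ifs with hi
  · rw [abs_div, abs_two]
    linarith [abs_le_linfnorm a i]
  · exact le_of_not_ge (mt (hS i) hi)

lemma IsFlat.of_halve {k : ℝ} (hk : 0 ≤ k)
    (hS : l2norm a ≤ k * linfnorm a → ∀ i, linfnorm a / 2 ≤ |a i| → i ∈ S)
    (hflat : IsFlat k (halve S a)) :
    IsFlat k a ∧ linfnorm (halve S a) ≤ linfnorm a / 2 := by
  have hdouble : l2norm a ≤ k * linfnorm (halve S a) := by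
    unfold IsFlat at hflat
    linarith [l2norm_le_two_mul_l2norm_halve (S := S) (a := a)]
  have hhalf : linfnorm (halve S a) ≤ linfnorm a / 2 :=
    linfnorm_halve_le_half (hS (hdouble.trans (by gcongr; exact linfnorm_halve_le)))
  refine ⟨?_, hhalf⟩
  calc l2norm a ≤ k * linfnorm (halve S a) := hdouble
    _ ≤ k * (linfnorm a / 2) := by gcongr
    _ = k / 2 * linfnorm a := by ring

end

/-- Lemma on the ℓ₂/ℓ∞ evolution of an iteratively halved vector. -/
theorem stmt0 {n T : ℕ} (k : ℝ) (hk : 0 < k)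
    (v : ℕ → Fin n → ℝ) (hv0 : linfnorm (v 0) ≤ 1)
    (hstep : ∀ t < T, ∃ S : Finset (Fin n),
      (l2norm (v t) ≤ k * linfnorm (v t) →
        ∀ i, linfnorm (v t) / 2 ≤ |v t i| → i ∈ S) ∧
      (∀ i, v (t + 1) i = if i ∈ S then v t i / 2 else v t i)) :
    k / 2 * linfnorm (v T) < l2norm (v T) ∨ l2norm (v T) ≤ 2 ^ (-(T : ℝ)) * k := by
  refine or_iff_not_imp_left.2 fun hT => ?_
  have hflatT : IsFlat k (v T) := not_lt.1 hT
  have hback : ∀ t < T, IsFlat k (v (t + 1)) →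
      IsFlat k (v t) ∧ linfnorm (v (t + 1)) ≤ linfnorm (v t) / 2 := by
    intro t ht hflat
    obtain ⟨S, hS, hnext⟩ := hstep t ht
    rw [show v (t + 1) = halve S (v t) from funext hnext] at hflat ⊢
    exact hflat.of_halve hk.le hS
  have hflat : ∀ t ≤ T, IsFlat k (v t) := fun t ht =>
    Nat.decreasingInduction (fun s hs h => (hback s hs h).1) hflatT ht
  have hdecay : linfnorm (v T) ≤ (1 / 2) ^ T * linfnorm (v 0) :=
    le_geom (u := fun t => linfnorm (v t)) (by norm_num) T fun t ht => by
      linarith [(hback t ht (hflat (t + 1) ht)).2]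
  have hpow : (2 : ℝ) ^ (-(T : ℝ)) = (1 / 2) ^ T := by
    rw [Real.rpow_neg zero_le_two, Real.rpow_natCast, one_div, inv_pow]
  calc l2norm (v T) ≤ k / 2 * linfnorm (v T) := hflatT
    _ ≤ k / 2 * (1 / 2) ^ T := by
      gcongr
      exact hdecay.trans (mul_le_of_le_one_right (by positivity) hv0)
    _ ≤ k * (1 / 2) ^ T := by gcongr; linarith
    _ = 2 ^ (-(T : ℝ)) * k := by rw [hpow, mul_comm]
end

section
/- Let w ∈ R^n be a unit vector, β ∈ (−1, 0), and i a fixed index. Define Σ = I_{n−1} + β w_{−i} w_{−i}ᵀ where w_{−i} ∈ R^{n−1} is w with coordinate i removed. Then for every v ∈ R^{n−1}, vᵀΣv ≥ vᵀDv, where D is the diagonal matrix with D_{aa} = 0 if a ∈ supp(w_{−i}) and D_{aa} = 1 otherwise. Consequently D ⪯ Σ ⪯ I_{n−1}, and since I_{n−1} − D has rank at most |supp(w)|, if w is k-sparse then Σ is (1,k)-rescalable. -/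
open Matrix

lemma qform_eq {p : ℕ} (M : Matrix (Fin p) (Fin p) ℝ) (v : Fin p → ℝ) :
    v ⬝ᵥ M.mulVec v = ∑ a, ∑ b, v a * M a b * v b := by
  simp [Matrix.mulVec, dotProduct, Finset.mul_sum, mul_assoc]

lemma qform_rankone {p : ℕ} (u : Fin p → ℝ) (v : Fin p → ℝ) :
    v ⬝ᵥ (Matrix.of (fun a b => u a * u b)).mulVec v = (∑ a, v a * u a)^2 := by
  rw [qform_eq, sq, Finset.sum_mul_sum]
  apply Finset.sum_congr rfl; intro a _
  apply Finset.sum_congr rfl; intro b _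
  simp [Matrix.of_apply]; ring

lemma qform_diagonal {p : ℕ} (g : Fin p → ℝ) (v : Fin p → ℝ) :
    v ⬝ᵥ (Matrix.diagonal g).mulVec v = ∑ a, g a * v a ^ 2 := by
  simp only [dotProduct, Matrix.mulVec_diagonal]
  apply Finset.sum_congr rfl; intro a _; ring

lemma rankone_psd {p : ℕ} (c : ℝ) (hc : 0 ≤ c) (u : Fin p → ℝ) :
    (c • Matrix.of (fun a b => u a * u b)).PosSemidef := by
  refine Matrix.PosSemidef.of_dotProduct_mulVec_nonneg ?_ ?_
  · ext a b
    simp [Matrix.conjTranspose_apply, Matrix.smul_apply, mul_comm]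
  · intro x
    simp only [star_trivial]
    rw [Matrix.smul_mulVec, dotProduct_smul, smul_eq_mul, qform_rankone]
    positivity

/-- For a unit vector w, β ∈ (−1,0) and index i, the matrix
Σ = I_{n−1} + β w_{−i} w_{−i}ᵀ satisfies vᵀΣv ≥ vᵀDv where D is the 0/1 diagonal matrix
vanishing exactly on supp(w_{−i}); consequently D ⪯ Σ ⪯ I, and if w is k-sparse then Σ is
(1,k)-rescalable. -/
theorem stmt10 {p k : ℕ} (β : ℝ) (hβ : β ∈ Set.Ioo (-1:ℝ) 0)
    (w : Fin (p+1) → ℝ) (hw : ∑ a, w a ^ 2 = 1)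
    (hk : ({a | w a ≠ 0} : Set (Fin (p+1))).ncard ≤ k)
    (i : Fin (p+1)) :
    ∀ (w' : Fin p → ℝ), w' = (fun a => w (i.succAbove a)) →
    ∀ (S : Matrix (Fin p) (Fin p) ℝ),
      S = (1 : Matrix (Fin p) (Fin p) ℝ) + β • Matrix.of (fun a b => w' a * w' b) →
    ∀ (D : Matrix (Fin p) (Fin p) ℝ),
      D = Matrix.diagonal (fun a => if w' a = 0 then (1:ℝ) else 0) →
    (∀ v : Fin p → ℝ, v ⬝ᵥ D.mulVec v ≤ v ⬝ᵥ S.mulVec v) ∧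
    (S - D).PosSemidef ∧ ((1 : Matrix (Fin p) (Fin p) ℝ) - S).PosSemidef ∧
    ∃ (d : Fin p → ℝ) (L : Matrix (Fin p) (Fin p) ℝ),
      (∀ a, 0 < d a) ∧ L.PosSemidef ∧ L.rank ≤ k ∧
      (∀ v : Fin p → ℝ, v ⬝ᵥ v ≤
        v ⬝ᵥ ((Matrix.diagonal (fun a => 1/Real.sqrt (d a)) * S *
               Matrix.diagonal (fun a => 1/Real.sqrt (d a))).mulVec v)) ∧
      (((1 : Matrix (Fin p) (Fin p) ℝ) + L) -
        Matrix.diagonal (fun a => 1/Real.sqrt (d a)) * S *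
        Matrix.diagonal (fun a => 1/Real.sqrt (d a))).PosSemidef := by
  obtain ⟨hβ1, hβ2⟩ := hβ
  intro w' hw' S hS D hD
  -- norm of w' at most 1
  have hw'norm : ∑ a, w' a ^ 2 ≤ 1 := by
    subst hw'
    have h := Fin.sum_univ_succAbove (fun b => w b ^ 2) i
    nlinarith [sq_nonneg (w i)]
  -- Cauchy–Schwarz key inequality
  have CS : ∀ u : Fin p → ℝ,
      (∑ a, u a * w' a)^2 ≤ ∑ a, (if w' a = 0 then 0 else u a ^ 2) := by
    intro u
    have h1 : (∑ a, u a * w' a) = ∑ a, (if w' a = 0 then 0 else u a) * w' a := by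
      apply Finset.sum_congr rfl; intro a _
      by_cases h : w' a = 0 <;> simp [h]
    have h2 := Finset.sum_mul_sq_le_sq_mul_sq Finset.univ
      (fun a => if w' a = 0 then 0 else u a) w'
    have h3 : ∑ a, (if w' a = 0 then (0:ℝ) else u a)^2
        = ∑ a, (if w' a = 0 then 0 else u a ^ 2) := by
      apply Finset.sum_congr rfl; intro a _
      by_cases h : w' a = 0 <;> simp [h]
    have hs : (0:ℝ) ≤ ∑ a, (if w' a = 0 then 0 else u a ^ 2) := by
      apply Finset.sum_nonneg; intro a _; positivity
    calc (∑ a, u a * w' a)^2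
        = (∑ a, (if w' a = 0 then 0 else u a) * w' a)^2 := by rw [h1]
      _ ≤ (∑ a, (if w' a = 0 then (0:ℝ) else u a)^2) * ∑ a, w' a ^ 2 := h2
      _ ≤ (∑ a, (if w' a = 0 then 0 else u a ^ 2)) * 1 := by
          rw [h3]; exact mul_le_mul_of_nonneg_left hw'norm hs
      _ = _ := mul_one _
  -- quadratic form of S
  have qS : ∀ v : Fin p → ℝ,
      v ⬝ᵥ S.mulVec v = (∑ a, v a ^ 2) + β * (∑ a, v a * w' a)^2 := by
    intro v
    rw [hS, Matrix.add_mulVec, dotProduct_add, Matrix.smul_mulVec,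
      dotProduct_smul, Matrix.one_mulVec, smul_eq_mul, qform_rankone]
    congr 1
    simp [dotProduct, sq]
  -- quadratic form of D
  have qD : ∀ v : Fin p → ℝ,
      v ⬝ᵥ D.mulVec v = ∑ a, (if w' a = 0 then v a ^ 2 else 0) := by
    intro v
    rw [hD, qform_diagonal]
    apply Finset.sum_congr rfl; intro a _
    by_cases h : w' a = 0 <;> simp [h]
  -- main inequality D ⪯ S
  have main : ∀ v : Fin p → ℝ, v ⬝ᵥ D.mulVec v ≤ v ⬝ᵥ S.mulVec v := by
    intro v
    rw [qS, qD]
    have split : (∑ a, v a ^ 2)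
        = (∑ a, (if w' a = 0 then v a ^ 2 else 0)) + ∑ a, (if w' a = 0 then 0 else v a ^ 2) := by
      rw [← Finset.sum_add_distrib]
      apply Finset.sum_congr rfl; intro a _
      by_cases h : w' a = 0 <;> simp [h]
    have hcs := CS v
    nlinarith [sq_nonneg (∑ a, v a * w' a)]
  refine ⟨main, ?_, ?_, ?_⟩
  · -- S - D PSD
    refine Matrix.PosSemidef.of_dotProduct_mulVec_nonneg ?_ ?_
    · have hSh : S.IsHermitian := by
        rw [hS]; ext a b
        simp [Matrix.conjTranspose_apply, Matrix.one_apply, Matrix.smul_apply, mul_comm,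
          eq_comm]
      have hDh : D.IsHermitian := by rw [hD]; exact Matrix.isHermitian_diagonal _
      exact hSh.sub hDh
    · intro x
      simp only [star_trivial, Matrix.sub_mulVec, dotProduct_sub, sub_nonneg]
      exact main x
  · -- 1 - S PSD
    have h1 : (1 : Matrix (Fin p) (Fin p) ℝ) - S
        = (-β) • Matrix.of (fun a b => w' a * w' b) := by
      rw [hS, neg_smul]; abel
    rw [h1]
    exact rankone_psd (-β) (by linarith) w'
  · -- rescalability
    set d : Fin p → ℝ := fun a => if w' a = 0 then 1 else 1 + β with hd
    have hdpos : ∀ a, 0 < d a := by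
      intro a; by_cases h : w' a = 0 <;> simp [hd, h] <;> linarith
    set f : Fin p → ℝ := fun a => 1 / Real.sqrt (d a) with hf
    have hfsq : ∀ a, f a ^ 2 = 1 / d a := by
      intro a
      rw [hf]
      rw [div_pow, one_pow, Real.sq_sqrt (hdpos a).le]
    set L : Matrix (Fin p) (Fin p) ℝ :=
      Matrix.diagonal (fun a => if w' a = 0 then 0 else (-β) / (1 + β)) with hL
    have hLpsd : L.PosSemidef := by
      rw [hL]
      apply Matrix.posSemidef_diagonal_iff.2
      intro a
      by_cases h : w' a = 0
      · simp [h]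
      · simp only [h, if_false]
        apply div_nonneg <;> linarith
    -- rank bound
    have hLrank : L.rank ≤ k := by
      rw [hL, Matrix.rank_diagonal]
      have hinj : Function.Injective
          (fun a : {a : Fin p // ¬ (if w' a = 0 then (0:ℝ) else (-β)/(1+β)) = 0} =>
            (⟨i.succAbove a.1, by
              obtain ⟨a, ha⟩ := a
              by_cases h : w' a = 0
              · simp [h] at ha
              · simpa [hw'] using h⟩ : {b : Fin (p+1) // w b ≠ 0})) := by
        intro a b hab
        have := Fin.succAbove_right_injective (p := i) (congrArg Subtype.val hab)
        exact Subtype.ext this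
      have hcard := Fintype.card_le_of_injective _ hinj
      have hncard : ({a | w a ≠ 0} : Set (Fin (p+1))).ncard
          = Fintype.card {b : Fin (p+1) // w b ≠ 0} := by
        have h0 : ({a | w a ≠ 0} : Set (Fin (p+1))).ncard
            = Nat.card {b : Fin (p+1) // w b ≠ 0} := rfl
        rw [h0, Nat.card_eq_fintype_card]
      calc Fintype.card {a : Fin p // ¬ (if w' a = 0 then (0:ℝ) else (-β)/(1+β)) = 0}
          ≤ Fintype.card {b : Fin (p+1) // w b ≠ 0} := hcard
        _ = ({a | w a ≠ 0} : Set (Fin (p+1))).ncard := hncard.symm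
        _ ≤ k := hk
    -- entrywise identity for the scaled matrix
    have hESE : Matrix.diagonal f * S * Matrix.diagonal f
        = Matrix.diagonal (fun a => 1 / d a)
          + β • Matrix.of (fun a b => (w' a * f a) * (w' b * f b)) := by
      ext a b
      rw [Matrix.mul_diagonal, Matrix.diagonal_mul, hS]
      by_cases h : a = b
      · subst h
        simp only [Matrix.add_apply, Matrix.one_apply_eq, Matrix.smul_apply,
          Matrix.of_apply, Matrix.diagonal_apply_eq, smul_eq_mul]
        have := hfsq a
        nlinarith [hfsq a]
      · simp only [Matrix.add_apply, Matrix.one_apply_ne h, Matrix.smul_apply,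
          Matrix.of_apply, Matrix.diagonal_apply_ne _ h, smul_eq_mul]
        ring
    -- quadratic form of the scaled matrix
    have qESE : ∀ v : Fin p → ℝ,
        v ⬝ᵥ (Matrix.diagonal f * S * Matrix.diagonal f).mulVec v
          = (∑ a, (1/d a) * v a ^ 2) + β * (∑ a, v a * (w' a * f a))^2 := by
      intro v
      rw [hESE, Matrix.add_mulVec, dotProduct_add, Matrix.smul_mulVec,
        dotProduct_smul, smul_eq_mul, qform_rankone, qform_diagonal]
    refine ⟨d, L, hdpos, hLpsd, hLrank, ?_, ?_⟩
    · -- lower bound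
      intro v
      rw [qESE]
      set u : Fin p → ℝ := fun a => v a * f a with hu
      have huw : (∑ a, v a * (w' a * f a)) = ∑ a, u a * w' a := by
        apply Finset.sum_congr rfl; intro a _; rw [hu]; ring
      have hvd : ∀ a, v a ^ 2 = d a * u a ^ 2 := by
        intro a
        have h3 : d a * f a ^ 2 = 1 := by
          rw [hfsq a, mul_one_div, div_self (hdpos a).ne']
        show v a ^ 2 = d a * (v a * f a) ^ 2
        linear_combination (-(v a ^ 2)) * h3
      have hud : ∀ a, (1/d a) * v a ^ 2 = u a ^ 2 := by
        intro a
        have h0 := (hdpos a).ne'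
        rw [hvd a]
        field_simp
      have e1 : (∑ a, (1/d a) * v a ^ 2) = ∑ a, u a ^ 2 := by
        exact Finset.sum_congr rfl (fun a _ => hud a)
      have e2 : v ⬝ᵥ v = ∑ a, d a * u a ^ 2 := by
        simp only [dotProduct]
        exact Finset.sum_congr rfl (fun a _ => by rw [← sq, hvd a])
      rw [e1, e2, huw]
      have e3 : (∑ a, u a ^ 2) - (∑ a, d a * u a ^ 2)
          = (-β) * ∑ a, (if w' a = 0 then 0 else u a ^ 2) := by
        rw [Finset.mul_sum, ← Finset.sum_sub_distrib]
        apply Finset.sum_congr rfl; intro a _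
        by_cases h : w' a = 0 <;> simp [hd, h] <;> ring
      have hcs := CS u
      nlinarith [sq_nonneg (∑ a, u a * w' a)]
    · -- upper bound PSD
      have hid : ((1 : Matrix (Fin p) (Fin p) ℝ) + L)
          - Matrix.diagonal f * S * Matrix.diagonal f
          = (-β) • Matrix.of (fun a b => (w' a * f a) * (w' b * f b)) := by
        rw [hESE]
        have hne : (1:ℝ) + β ≠ 0 := by intro hc; linarith
        have h1L : (1 : Matrix (Fin p) (Fin p) ℝ) + L
            = Matrix.diagonal (fun a => 1 / d a) := by
          ext a b
          by_cases hab : a = b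
          · subst hab
            simp only [Matrix.add_apply, Matrix.one_apply_eq, hL,
              Matrix.diagonal_apply_eq]
            by_cases h : w' a = 0
            · simp [hd, h]
            · simp only [hd, h, if_false]
              field_simp
              ring
          · simp [Matrix.one_apply_ne hab, hL, Matrix.diagonal_apply_ne _ hab]
        rw [h1L, neg_smul]
        abel
      rw [hid]
      exact rankone_psd (-β) (by linarith) _
end

section
/- Let n, k, d ∈ N with k ≤ √(n/(4e)). Let w₁, w₂ be independent draws from the fixed-size sparse Rademacher prior W_{n,k}. Then A_{n,k,d} := k^{2d} · E[⟨w₁, w₂⟩^{2d}] ≤ 2 · (2d)^{2d}. -/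
open Finset


lemma aux_count {n k l : ℕ} (hlk : l ≤ k) (T : Finset (Fin n)) (hT : T.card = l) :
    ((Finset.powersetCard k (Finset.univ : Finset (Fin n))).filter (fun S => T ⊆ S)).card
      = (n - l).choose (k - l) := by
  have hc : (Finset.powersetCard (k - l) Tᶜ).card = (n - l).choose (k - l) := by
    rw [Finset.card_powersetCard, Finset.card_compl, hT, Fintype.card_fin]
  rw [← hc]
  apply Finset.card_bij' (i := fun S _ => S \ T) (j := fun U _ => U ∪ T)
  · intro S hS
    rw [Finset.mem_filter, Finset.mem_powersetCard] at hS
    rw [Finset.mem_powersetCard]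
    refine ⟨fun x hx => ?_, ?_⟩
    · rw [Finset.mem_compl]
      exact (Finset.mem_sdiff.1 hx).2
    · rw [Finset.card_sdiff_of_subset hS.2, hS.1.2, hT]
  · intro U hU
    rw [Finset.mem_powersetCard] at hU
    have hdisj : Disjoint U T := by
      rw [Finset.disjoint_right]
      intro x hxT hxU
      exact (Finset.mem_compl.1 (hU.1 hxU)) hxT
    rw [Finset.mem_filter, Finset.mem_powersetCard]
    refine ⟨⟨Finset.subset_univ _, ?_⟩, Finset.subset_union_right⟩
    rw [Finset.card_union_of_disjoint hdisj, hU.2, hT]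
    omega
  · intro S hS
    rw [Finset.mem_filter] at hS
    exact Finset.sdiff_union_of_subset hS.2
  · intro U hU
    rw [Finset.mem_powersetCard] at hU
    have hdisj : Disjoint U T := by
      rw [Finset.disjoint_right]
      intro x hxT hxU
      exact (Finset.mem_compl.1 (hU.1 hxU)) hxT
    rw [Finset.union_sdiff_right, Finset.sdiff_eq_self_of_disjoint hdisj]

lemma aux_pair {n k d : ℕ} (I : Finset (Fin n)) (hI : I.card ≤ k) :
    ((I.card : ℝ))^(2*d) ≤ ((2*d:ℕ):ℝ)^(2*d)
      + ∑ l ∈ Finset.Ico (2*d+1) (k+1), (l:ℝ)^(2*d) * ((Finset.powersetCard l I).card : ℝ) := by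
  have hnn : (0:ℝ) ≤ ∑ l ∈ Finset.Ico (2*d+1) (k+1), (l:ℝ)^(2*d) * ((Finset.powersetCard l I).card : ℝ) := by
    apply Finset.sum_nonneg; intro l _; positivity
  rcases le_or_gt I.card (2*d) with h | h
  · have : ((I.card : ℝ))^(2*d) ≤ ((2*d:ℕ):ℝ)^(2*d) := by
      apply pow_le_pow_left₀ (by positivity)
      exact_mod_cast h
    linarith
  · have hmem : I.card ∈ Finset.Ico (2*d+1) (k+1) := by
      rw [Finset.mem_Ico]; omega
    have hone : (Finset.powersetCard I.card I).card = 1 := by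
      rw [Finset.card_powersetCard, Nat.choose_self]
    have hsingle : ((I.card:ℝ))^(2*d) * ((Finset.powersetCard I.card I).card : ℝ)
        ≤ ∑ l ∈ Finset.Ico (2*d+1) (k+1), (l:ℝ)^(2*d) * ((Finset.powersetCard l I).card : ℝ) := by
      apply Finset.single_le_sum (f := fun (l:ℕ) => (l:ℝ)^(2*d) * ((Finset.powersetCard l I).card : ℝ))
        (fun l _ => by positivity) hmem
    rw [hone] at hsingle
    push_cast at hsingle
    have h0 : (0:ℝ) ≤ ((2*d:ℕ):ℝ)^(2*d) := by positivity
    linarith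

-- (S3): 2^l * C(k,l)^2 * l^{2d} ≤ C(n,l)  under 2d+1 ≤ l ≤ k, 4e k² ≤ n
lemma aux_S3 {n k l d : ℕ} (h4e : 4 * Real.exp 1 * (k:ℝ)^2 ≤ n)
    (hld : 2*d+1 ≤ l) (hlk : l ≤ k) :
    (2:ℝ)^l * ((k.choose l : ℝ))^2 * (l:ℝ)^(2*d) ≤ (n.choose l : ℝ) := by
  have he1 : (2:ℝ) ≤ Real.exp 1 := by
    have := Real.exp_one_gt_d9; linarith
  have he0 : (0:ℝ) < Real.exp 1 := Real.exp_pos 1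
  have hk1 : 1 ≤ k := le_trans (by omega) hlk
  have hK1 : (1:ℝ) ≤ (k:ℝ) := by exact_mod_cast hk1
  have hL1 : (1:ℝ) ≤ (l:ℝ) := by
    have : 1 ≤ l := by omega
    exact_mod_cast this
  have hkn : (k:ℝ) ≤ (n:ℝ) := by nlinarith
  -- n - k ≥ 2 e k^2
  have hNK : 2 * Real.exp 1 * (k:ℝ)^2 ≤ (n:ℝ) - (k:ℝ) := by nlinarith
  have hNK0 : (0:ℝ) ≤ (n:ℝ) - (k:ℝ) := by nlinarith
  have hfac : (0:ℝ) < (l.factorial : ℝ) := by exact_mod_cast l.factorial_pos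
  -- f1 : C(k,l) ≤ k^l / l!
  have f1 : ((k.choose l : ℕ) : ℝ) ≤ (k:ℝ)^l / (l.factorial : ℝ) := by
    have := Nat.choose_le_pow_div (α := ℝ) l k
    simpa using this
  -- f2 : (N-K)^l / l! ≤ C(n,l)
  have f2 : ((n:ℝ) - (k:ℝ))^l / (l.factorial : ℝ) ≤ ((n.choose l : ℕ) : ℝ) := by
    have h := Nat.pow_le_choose (α := ℝ) l n
    refine le_trans (div_le_div_of_nonneg_right ?_ hfac.le) h
    have hcast : ((n + 1 - l : ℕ) : ℝ) = (n:ℝ) + 1 - (l:ℝ) := by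
      have hln : l ≤ n + 1 := by
        have : (l:ℝ) ≤ (n:ℝ) := le_trans (by exact_mod_cast hlk) hkn
        have : l ≤ n := by exact_mod_cast this
        omega
      push_cast [hln]
      ring
    rw [hcast]
    apply pow_le_pow_left₀ hNK0
    have : (l:ℝ) ≤ (k:ℝ) := by exact_mod_cast hlk
    linarith
  -- f3 : l^l / l! ≤ e^l
  have f3 : (l:ℝ)^l / (l.factorial : ℝ) ≤ Real.exp 1 ^ l := by
    rw [Real.exp_one_pow]
    exact Real.pow_div_factorial_le_exp (l:ℝ) (by positivity) l
  -- core: 2^l k^{2l} l^{2d} ≤ (N-K)^l * l!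
  have core : (2:ℝ)^l * ((k:ℝ)^l)^2 * (l:ℝ)^(2*d) ≤ ((n:ℝ)-(k:ℝ))^l * (l.factorial : ℝ) := by
    have hLd : (l:ℝ)^(2*d) ≤ (l:ℝ)^l := pow_le_pow_right₀ hL1 (by omega)
    have hfac2 : (l:ℝ)^l / Real.exp 1 ^ l ≤ (l.factorial : ℝ) := by
      rw [div_le_iff₀ (by positivity)] at f3 ⊢
      linarith [f3]
    have step : (2:ℝ)^l * ((k:ℝ)^l)^2 * (l:ℝ)^l ≤ ((n:ℝ)-(k:ℝ))^l * ((l:ℝ)^l / Real.exp 1 ^ l) := by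
      have expand : (2:ℝ)^l * ((k:ℝ)^l)^2 * (l:ℝ)^l = (2 * (k:ℝ)^2 * (l:ℝ))^l := by
        rw [← pow_mul]; rw [mul_pow, mul_pow]; ring_nf
      have expand2 : ((n:ℝ)-(k:ℝ))^l * ((l:ℝ)^l / Real.exp 1 ^ l)
          = (((n:ℝ)-(k:ℝ)) * (l:ℝ) / Real.exp 1)^l := by
        rw [div_pow, mul_pow]; ring
      rw [expand, expand2]
      apply pow_le_pow_left₀ (by positivity)
      rw [le_div_iff₀ he0]
      have : 2 * Real.exp 1 * (k:ℝ)^2 * (l:ℝ) ≤ (((n:ℝ)-(k:ℝ)) * (l:ℝ)) := by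
        apply mul_le_mul_of_nonneg_right hNK (by linarith)
      linarith [this]
    calc (2:ℝ)^l * ((k:ℝ)^l)^2 * (l:ℝ)^(2*d)
        ≤ (2:ℝ)^l * ((k:ℝ)^l)^2 * (l:ℝ)^l := by
          apply mul_le_mul_of_nonneg_left hLd (by positivity)
      _ ≤ ((n:ℝ)-(k:ℝ))^l * ((l:ℝ)^l / Real.exp 1 ^ l) := step
      _ ≤ ((n:ℝ)-(k:ℝ))^l * (l.factorial : ℝ) := by
          apply mul_le_mul_of_nonneg_left hfac2 (by positivity)
  -- now combine
  calc (2:ℝ)^l * ((k.choose l : ℝ))^2 * (l:ℝ)^(2*d)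
      ≤ (2:ℝ)^l * ((k:ℝ)^l / (l.factorial:ℝ))^2 * (l:ℝ)^(2*d) := by
        apply mul_le_mul_of_nonneg_right ?_ (by positivity)
        apply mul_le_mul_of_nonneg_left ?_ (by positivity)
        apply pow_le_pow_left₀ (by positivity) f1
    _ ≤ ((n:ℝ) - (k:ℝ))^l / (l.factorial : ℝ) := by
        rw [div_pow, le_div_iff₀ hfac]
        have heq : (2:ℝ)^l * (((k:ℝ)^l)^2 / ((l.factorial:ℝ))^2) * (l:ℝ)^(2*d) * (l.factorial:ℝ)
            = ((2:ℝ)^l * ((k:ℝ)^l)^2 * (l:ℝ)^(2*d)) / (l.factorial:ℝ) := by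
          field_simp
        rw [heq, div_le_iff₀ hfac]
        exact core
    _ ≤ ((n.choose l : ℕ) : ℝ) := f2


lemma aux_tail {n k l d : ℕ} (h4e : 4 * Real.exp 1 * (k:ℝ)^2 ≤ n)
    (hld : 2*d+1 ≤ l) (hlk : l ≤ k) :
    (n.choose l : ℝ) * (((n-l).choose (k-l) : ℕ) : ℝ)^2 * (l:ℝ)^(2*d)
      ≤ (1/2:ℝ)^l * ((2*d:ℕ):ℝ)^(2*d) * ((n.choose k : ℝ))^2 := by
  have he1 : (2:ℝ) ≤ Real.exp 1 := by
    have := Real.exp_one_gt_d9; linarith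
  have hk1 : 1 ≤ k := le_trans (by omega) hlk
  have hK1 : (1:ℝ) ≤ (k:ℝ) := by exact_mod_cast hk1
  have hknR : (k:ℝ) ≤ (n:ℝ) := by nlinarith
  have hkn : k ≤ n := by exact_mod_cast hknR
  have hCnl : (0:ℝ) < (n.choose l : ℝ) := by
    exact_mod_cast Nat.choose_pos (le_trans hlk hkn)
  have hid : (n.choose l : ℝ) * (((n-l).choose (k-l) : ℕ) : ℝ) = (n.choose k : ℝ) * (k.choose l : ℝ) := by
    exact_mod_cast (Nat.choose_mul hlk).symm
  have hT : (1:ℝ) ≤ ((2*d:ℕ):ℝ)^(2*d) := by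
    rcases Nat.eq_zero_or_pos d with hd | hd
    · subst hd; simp
    · apply one_le_pow₀
      have : 1 ≤ 2*d := by omega
      exact_mod_cast this
  have hS3 := aux_S3 h4e hld hlk
  have h2 : (0:ℝ) < 2^l := by positivity
  have step : ((k.choose l:ℝ))^2 * (l:ℝ)^(2*d)
      ≤ (1/2:ℝ)^l * ((2*d:ℕ):ℝ)^(2*d) * (n.choose l : ℝ) := by
    have h1 : ((k.choose l:ℝ))^2 * (l:ℝ)^(2*d) ≤ (n.choose l : ℝ) / 2^l := by
      rw [le_div_iff₀ h2]; linear_combination hS3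
    have h2' : (n.choose l : ℝ) / 2^l = (1/2:ℝ)^l * (n.choose l : ℝ) := by
      rw [div_pow]; ring
    have h3 : (1/2:ℝ)^l * (n.choose l : ℝ)
        ≤ (1/2:ℝ)^l * ((2*d:ℕ):ℝ)^(2*d) * (n.choose l : ℝ) := by
      have hp : (0:ℝ) ≤ (1/2:ℝ)^l * (n.choose l : ℝ) := by positivity
      nlinarith
    linarith [h1, h2' ▸ h1, h3]
  refine (mul_le_mul_iff_of_pos_right hCnl).1 ?_
  calc (n.choose l : ℝ) * (((n-l).choose (k-l):ℕ) : ℝ)^2 * (l:ℝ)^(2*d) * (n.choose l : ℝ)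
      = ((n.choose l : ℝ) * (((n-l).choose (k-l):ℕ) : ℝ))^2 * (l:ℝ)^(2*d) := by ring
    _ = ((n.choose k : ℝ) * (k.choose l : ℝ))^2 * (l:ℝ)^(2*d) := by rw [hid]
    _ = ((n.choose k : ℝ))^2 * (((k.choose l : ℝ))^2 * (l:ℝ)^(2*d)) := by ring
    _ ≤ ((n.choose k : ℝ))^2 * ((1/2:ℝ)^l * ((2*d:ℕ):ℝ)^(2*d) * (n.choose l : ℝ)) :=
        mul_le_mul_of_nonneg_left step (sq_nonneg _)
    _ = (1/2:ℝ)^l * ((2*d:ℕ):ℝ)^(2*d) * ((n.choose k : ℝ))^2 * (n.choose l : ℝ) := by ring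


lemma aux_sum {n k l : ℕ} (hlk : l ≤ k) :
    (∑ S1 ∈ Finset.powersetCard k (Finset.univ : Finset (Fin n)),
      ∑ S2 ∈ Finset.powersetCard k (Finset.univ : Finset (Fin n)),
        ((Finset.powersetCard l (S1 ∩ S2)).card : ℝ))
    = (n.choose l : ℝ) * ((((n-l).choose (k-l) : ℕ)) : ℝ)^2 := by
  set P := Finset.powersetCard k (Finset.univ : Finset (Fin n)) with hP
  set Q := Finset.powersetCard l (Finset.univ : Finset (Fin n)) with hQ
  have hrep : ∀ S1 S2 : Finset (Fin n), ((Finset.powersetCard l (S1 ∩ S2)).card : ℝ)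
      = ∑ T ∈ Q, (if T ⊆ S1 then (1:ℝ) else 0) * (if T ⊆ S2 then (1:ℝ) else 0) := by
    intro S1 S2
    have hflt : Finset.powersetCard l (S1 ∩ S2) = Q.filter (fun T => T ⊆ S1 ∧ T ⊆ S2) := by
      ext T
      simp only [Finset.mem_powersetCard, Finset.mem_filter, hQ, Finset.subset_inter_iff]
      constructor
      · rintro ⟨⟨h1, h2⟩, h3⟩; exact ⟨⟨Finset.subset_univ _, h3⟩, h1, h2⟩
      · rintro ⟨⟨_, h3⟩, h1, h2⟩; exact ⟨⟨h1, h2⟩, h3⟩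
    rw [hflt, ← Finset.sum_boole]
    apply Finset.sum_congr rfl
    intro T _
    by_cases h1 : T ⊆ S1 <;> by_cases h2 : T ⊆ S2 <;> simp [h1, h2]
  have hcount : ∀ T ∈ Q, (∑ S ∈ P, (if T ⊆ S then (1:ℝ) else 0))
      = (((n-l).choose (k-l) : ℕ) : ℝ) := by
    intro T hT
    rw [Finset.sum_boole, aux_count hlk T (Finset.mem_powersetCard.1 hT).2]
  calc ∑ S1 ∈ P, ∑ S2 ∈ P, ((Finset.powersetCard l (S1 ∩ S2)).card : ℝ)
      = ∑ S1 ∈ P, ∑ S2 ∈ P, ∑ T ∈ Q,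
          (if T ⊆ S1 then (1:ℝ) else 0) * (if T ⊆ S2 then (1:ℝ) else 0) := by
        exact Finset.sum_congr rfl fun S1 _ => Finset.sum_congr rfl fun S2 _ => hrep S1 S2
    _ = ∑ S1 ∈ P, ∑ T ∈ Q, (if T ⊆ S1 then (1:ℝ) else 0) * ∑ S2 ∈ P, (if T ⊆ S2 then (1:ℝ) else 0) := by
        refine Finset.sum_congr rfl fun S1 _ => ?_
        rw [Finset.sum_comm]
        exact Finset.sum_congr rfl fun T _ => (Finset.mul_sum _ _ _).symm
    _ = ∑ T ∈ Q, (∑ S1 ∈ P, (if T ⊆ S1 then (1:ℝ) else 0))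
          * ∑ S2 ∈ P, (if T ⊆ S2 then (1:ℝ) else 0) := by
        rw [Finset.sum_comm]
        exact Finset.sum_congr rfl fun T _ => (Finset.sum_mul _ _ _).symm
    _ = ∑ T ∈ Q, (((n-l).choose (k-l) : ℕ) : ℝ) * (((n-l).choose (k-l) : ℕ) : ℝ) := by
        refine Finset.sum_congr rfl fun T hT => ?_
        rw [hcount T hT]
    _ = (n.choose l : ℝ) * ((((n-l).choose (k-l) : ℕ)) : ℝ)^2 := by
        rw [Finset.sum_const, hQ, Finset.card_powersetCard, Finset.card_univ, Fintype.card_fin,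
          nsmul_eq_mul]
        ring

lemma aux_sign {n k d : ℕ} (S1 S2 : Finset (Fin n)) (σ1 σ2 : Fin n → Bool) :
    ((k:ℝ) * ∑ i, (if i ∈ S1 then (if σ1 i then (1:ℝ) else -1) / Real.sqrt k else 0) *
          (if i ∈ S2 then (if σ2 i then (1:ℝ) else -1) / Real.sqrt k else 0)) ^ (2*d)
      ≤ (((S1 ∩ S2).card : ℝ)) ^ (2*d) := by
  set s := Real.sqrt k with hs
  have habs_i : ∀ i : Fin n,
      |(k:ℝ) * ((if i ∈ S1 then (if σ1 i then (1:ℝ) else -1) / s else 0) *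
        (if i ∈ S2 then (if σ2 i then (1:ℝ) else -1) / s else 0))|
      ≤ (if i ∈ S1 ∩ S2 then (1:ℝ) else 0) := by
    intro i
    by_cases hi1 : i ∈ S1
    · by_cases hi2 : i ∈ S2
      · simp only [hi1, hi2, if_true, Finset.mem_inter, and_self]
        rcases Nat.eq_zero_or_pos k with hk | hk
        · subst hk; simp
        · have hk0 : (0:ℝ) < (k:ℝ) := by exact_mod_cast hk
          have hss : s * s = (k:ℝ) := Real.mul_self_sqrt (by positivity)
          have heq : (k:ℝ) * ((if σ1 i then (1:ℝ) else -1) / s * ((if σ2 i then (1:ℝ) else -1) / s))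
              = (if σ1 i then (1:ℝ) else -1) * (if σ2 i then (1:ℝ) else -1) * ((k:ℝ) / (s * s)) := by
            ring
          rw [heq, hss, div_self (ne_of_gt hk0), mul_one, abs_mul]
          have h1 : |(if σ1 i then (1:ℝ) else -1)| = 1 := by split_ifs <;> simp
          have h2 : |(if σ2 i then (1:ℝ) else -1)| = 1 := by split_ifs <;> simp
          rw [h1, h2]; norm_num
      · simp [hi1, hi2, Finset.mem_inter]
    · simp [hi1, Finset.mem_inter]
  have habs : |(k:ℝ) * ∑ i, (if i ∈ S1 then (if σ1 i then (1:ℝ) else -1) / s else 0) *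
      (if i ∈ S2 then (if σ2 i then (1:ℝ) else -1) / s else 0)| ≤ ((S1 ∩ S2).card : ℝ) := by
    rw [Finset.mul_sum]
    refine le_trans (Finset.abs_sum_le_sum_abs _ _) ?_
    refine le_trans (Finset.sum_le_sum fun i _ => habs_i i) ?_
    rw [Finset.sum_ite_mem, Finset.univ_inter, Finset.sum_const, nsmul_eq_mul, mul_one]
  calc ((k:ℝ) * ∑ i, (if i ∈ S1 then (if σ1 i then (1:ℝ) else -1) / s else 0) *
        (if i ∈ S2 then (if σ2 i then (1:ℝ) else -1) / s else 0)) ^ (2*d)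
      = |(k:ℝ) * ∑ i, (if i ∈ S1 then (if σ1 i then (1:ℝ) else -1) / s else 0) *
        (if i ∈ S2 then (if σ2 i then (1:ℝ) else -1) / s else 0)| ^ (2*d) :=
        (Even.pow_abs ⟨d, by ring⟩ _).symm
    _ ≤ (((S1 ∩ S2).card : ℝ)) ^ (2*d) := pow_le_pow_left₀ (abs_nonneg _) habs _

/-- Moment bound for the overlap of two independent draws from the fixed-size sparse
Rademacher prior W_{n,k}: k^{2d} E[⟨w₁,w₂⟩^{2d}] ≤ 2 (2d)^{2d} when k ≤ √(n/(4e)).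
The expectation is written explicitly as a uniform average over supports S₁, S₂ of size k
and sign patterns σ₁, σ₂. -/
theorem stmt13 {n k d : ℕ} (hk : (k:ℝ) ≤ Real.sqrt (n / (4 * Real.exp 1))) :
    (k:ℝ)^(2*d) *
      (((Finset.powersetCard k (Finset.univ : Finset (Fin n))).card ^ 2
          * 2 ^ (2 * n) : ℝ))⁻¹ *
      (∑ S₁ ∈ Finset.powersetCard k (Finset.univ : Finset (Fin n)),
       ∑ S₂ ∈ Finset.powersetCard k (Finset.univ : Finset (Fin n)),
       ∑ σ₁ : Fin n → Bool, ∑ σ₂ : Fin n → Bool,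
        (∑ i, (if i ∈ S₁ then (if σ₁ i then (1:ℝ) else -1) / Real.sqrt k else 0) *
              (if i ∈ S₂ then (if σ₂ i then (1:ℝ) else -1) / Real.sqrt k else 0)) ^ (2*d))
      ≤ 2 * ((2*d : ℕ) : ℝ)^(2*d) := by
  have he0 : (0:ℝ) < Real.exp 1 := Real.exp_pos 1
  have he1 : (2:ℝ) ≤ Real.exp 1 := by have := Real.exp_one_gt_d9; linarith
  have hk2 : ((k:ℝ))^2 ≤ (n:ℝ) / (4 * Real.exp 1) :=
    (Real.le_sqrt (by positivity) (by positivity)).1 hk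
  have h4e : 4 * Real.exp 1 * (k:ℝ)^2 ≤ (n:ℝ) := by
    rw [div_eq_mul_inv] at hk2
    have h4 : (0:ℝ) < 4 * Real.exp 1 := by positivity
    calc 4 * Real.exp 1 * (k:ℝ)^2 ≤ 4 * Real.exp 1 * ((n:ℝ) * (4 * Real.exp 1)⁻¹) :=
          mul_le_mul_of_nonneg_left hk2 (le_of_lt h4)
      _ = (n:ℝ) := by field_simp
  have hkk : (k:ℝ) ≤ (k:ℝ)^2 := by
    rcases Nat.eq_zero_or_pos k with h | h
    · subst h; norm_num
    · have : (1:ℝ) ≤ (k:ℝ) := by exact_mod_cast h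
      nlinarith
  have hknR : (k:ℝ) ≤ (n:ℝ) := by nlinarith
  have hkn : k ≤ n := by exact_mod_cast hknR
  set P := Finset.powersetCard k (Finset.univ : Finset (Fin n)) with hPdef
  have hC : P.card = n.choose k := by
    rw [hPdef, Finset.card_powersetCard, Finset.card_univ, Fintype.card_fin]
  have hCpos : (0:ℝ) < ((n.choose k : ℕ):ℝ) := by exact_mod_cast Nat.choose_pos hkn
  set T : ℝ := ((2*d:ℕ):ℝ)^(2*d) with hTdef
  have hT0 : (0:ℝ) ≤ T := by positivity
  -- step 1 : pull k^(2d) inside and bound signs pointwise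
  have hquad : (k:ℝ)^(2*d) *
      (∑ S₁ ∈ P, ∑ S₂ ∈ P, ∑ σ₁ : Fin n → Bool, ∑ σ₂ : Fin n → Bool,
        (∑ i, (if i ∈ S₁ then (if σ₁ i then (1:ℝ) else -1) / Real.sqrt k else 0) *
              (if i ∈ S₂ then (if σ₂ i then (1:ℝ) else -1) / Real.sqrt k else 0)) ^ (2*d))
      ≤ (2:ℝ)^(2*n) * ∑ S₁ ∈ P, ∑ S₂ ∈ P, (((S₁ ∩ S₂).card : ℝ))^(2*d) := by
    have hcard2 : ((Finset.univ : Finset (Fin n → Bool)).card : ℝ) = 2^n := by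
      rw [Finset.card_univ]
      simp [Fintype.card_fun]
    calc (k:ℝ)^(2*d) *
        (∑ S₁ ∈ P, ∑ S₂ ∈ P, ∑ σ₁ : Fin n → Bool, ∑ σ₂ : Fin n → Bool,
          (∑ i, (if i ∈ S₁ then (if σ₁ i then (1:ℝ) else -1) / Real.sqrt k else 0) *
                (if i ∈ S₂ then (if σ₂ i then (1:ℝ) else -1) / Real.sqrt k else 0)) ^ (2*d))
        = ∑ S₁ ∈ P, ∑ S₂ ∈ P, ∑ σ₁ : Fin n → Bool, ∑ σ₂ : Fin n → Bool,
            ((k:ℝ) * ∑ i, (if i ∈ S₁ then (if σ₁ i then (1:ℝ) else -1) / Real.sqrt k else 0) *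
                (if i ∈ S₂ then (if σ₂ i then (1:ℝ) else -1) / Real.sqrt k else 0)) ^ (2*d) := by
          simp_rw [Finset.mul_sum, ← mul_pow]
          refine Finset.sum_congr rfl fun S₁ _ => Finset.sum_congr rfl fun S₂ _ =>
            Finset.sum_congr rfl fun σ₁ _ => Finset.sum_congr rfl fun σ₂ _ => ?_
          rw [Finset.mul_sum]
      _ ≤ ∑ S₁ ∈ P, ∑ S₂ ∈ P, ∑ _σ₁ : Fin n → Bool, ∑ _σ₂ : Fin n → Bool,
            (((S₁ ∩ S₂).card : ℝ))^(2*d) := by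
          refine Finset.sum_le_sum fun S₁ _ => Finset.sum_le_sum fun S₂ _ =>
            Finset.sum_le_sum fun σ₁ _ => Finset.sum_le_sum fun σ₂ _ => aux_sign S₁ S₂ σ₁ σ₂
      _ = ∑ S₁ ∈ P, ∑ S₂ ∈ P, (2:ℝ)^(2*n) * (((S₁ ∩ S₂).card : ℝ))^(2*d) := by
          refine Finset.sum_congr rfl fun S₁ _ => Finset.sum_congr rfl fun S₂ _ => ?_
          rw [Finset.sum_const, Finset.sum_const, nsmul_eq_mul, nsmul_eq_mul, hcard2,
            ← mul_assoc, ← pow_add]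
          ring
      _ = (2:ℝ)^(2*n) * ∑ S₁ ∈ P, ∑ S₂ ∈ P, (((S₁ ∩ S₂).card : ℝ))^(2*d) := by
          simp_rw [← Finset.mul_sum]
  -- step 2 : bound the pair sum
  have hm : ∀ S₁ ∈ P, ∀ S₂ ∈ P, (S₁ ∩ S₂).card ≤ k := by
    intro S₁ h1 S₂ _
    have hss : (S₁ ∩ S₂) ⊆ S₁ := Finset.inter_subset_left
    have h := Finset.card_le_card hss
    rwa [(Finset.mem_powersetCard.1 h1).2] at h
  have hgeom : ∑ l ∈ Finset.Ico (2*d+1) (k+1), (1/2:ℝ)^l ≤ 1 := by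
    have hsub : Finset.Ico (2*d+1) (k+1) ⊆ Finset.Ico 1 (k+1) :=
      Finset.Ico_subset_Ico (by omega) le_rfl
    refine le_trans (Finset.sum_le_sum_of_subset_of_nonneg hsub fun l _ _ => by positivity) ?_
    have : ∑ l ∈ Finset.Ico 1 (k+1), (1/2:ℝ)^l = ∑ j ∈ Finset.range k, (1/2:ℝ)^(1+j) := by
      rw [Finset.sum_Ico_eq_sum_range]
      simp
    rw [this]
    have h2 : ∑ j ∈ Finset.range k, (1/2:ℝ)^(1+j) = (1/2) * ∑ j ∈ Finset.range k, (1/2:ℝ)^j := by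
      rw [Finset.mul_sum]
      exact Finset.sum_congr rfl fun j _ => by rw [pow_add, pow_one]
    rw [h2]
    have h3 : ∑ j ∈ Finset.range k, (1/2:ℝ)^j ≤ 2 := sum_geometric_two_le k
    linarith
  have hsum1 : (∑ S₁ ∈ P, ∑ S₂ ∈ P, (((S₁ ∩ S₂).card : ℝ))^(2*d))
      ≤ ((n.choose k : ℕ):ℝ)^2 * T * 2 := by
    have step1 : (∑ S₁ ∈ P, ∑ S₂ ∈ P, (((S₁ ∩ S₂).card : ℝ))^(2*d))
        ≤ ∑ S₁ ∈ P, ∑ S₂ ∈ P, (T + ∑ l ∈ Finset.Ico (2*d+1) (k+1),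
            (l:ℝ)^(2*d) * ((Finset.powersetCard l (S₁ ∩ S₂)).card : ℝ)) :=
      Finset.sum_le_sum fun S₁ h1 => Finset.sum_le_sum fun S₂ h2 =>
        aux_pair _ (hm S₁ h1 S₂ h2)
    have step2 : (∑ S₁ ∈ P, ∑ S₂ ∈ P, (T + ∑ l ∈ Finset.Ico (2*d+1) (k+1),
            (l:ℝ)^(2*d) * ((Finset.powersetCard l (S₁ ∩ S₂)).card : ℝ)))
        = ((n.choose k : ℕ):ℝ)^2 * T
          + ∑ l ∈ Finset.Ico (2*d+1) (k+1), (l:ℝ)^(2*d) *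
              ((n.choose l : ℝ) * ((((n-l).choose (k-l) : ℕ)) : ℝ)^2) := by
      simp_rw [Finset.sum_add_distrib]
      congr 1
      · rw [Finset.sum_const, Finset.sum_const, nsmul_eq_mul, nsmul_eq_mul, hC, ← mul_assoc]
        ring
      · have e1 : ∀ S₁ : Finset (Fin n), (∑ S₂ ∈ P, ∑ l ∈ Finset.Ico (2*d+1) (k+1),
            (l:ℝ)^(2*d) * ((Finset.powersetCard l (S₁ ∩ S₂)).card : ℝ))
            = ∑ l ∈ Finset.Ico (2*d+1) (k+1), ∑ S₂ ∈ P,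
            (l:ℝ)^(2*d) * ((Finset.powersetCard l (S₁ ∩ S₂)).card : ℝ) :=
          fun S₁ => Finset.sum_comm
        simp_rw [e1]
        rw [Finset.sum_comm]
        refine Finset.sum_congr rfl fun l hl => ?_
        have hlk : l ≤ k := by have := (Finset.mem_Ico.1 hl).2; omega
        rw [← aux_sum (n := n) hlk]
        simp_rw [← Finset.mul_sum]
        rfl
    have step3 : (∑ l ∈ Finset.Ico (2*d+1) (k+1), (l:ℝ)^(2*d) *
              ((n.choose l : ℝ) * ((((n-l).choose (k-l) : ℕ)) : ℝ)^2))
        ≤ ((n.choose k : ℕ):ℝ)^2 * T := by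
      have hterm : ∀ l ∈ Finset.Ico (2*d+1) (k+1), (l:ℝ)^(2*d) *
              ((n.choose l : ℝ) * ((((n-l).choose (k-l) : ℕ)) : ℝ)^2)
          ≤ (1/2:ℝ)^l * (T * ((n.choose k : ℕ):ℝ)^2) := by
        intro l hl
        have h1 := (Finset.mem_Ico.1 hl).1
        have h2 : l ≤ k := by have := (Finset.mem_Ico.1 hl).2; omega
        have := aux_tail (n := n) (k := k) (l := l) (d := d) h4e h1 h2
        calc (l:ℝ)^(2*d) * ((n.choose l : ℝ) * ((((n-l).choose (k-l) : ℕ)) : ℝ)^2)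
            = (n.choose l : ℝ) * ((((n-l).choose (k-l) : ℕ)) : ℝ)^2 * (l:ℝ)^(2*d) := by ring
          _ ≤ (1/2:ℝ)^l * T * ((n.choose k : ℝ))^2 := this
          _ = (1/2:ℝ)^l * (T * ((n.choose k : ℕ):ℝ)^2) := by ring
      calc (∑ l ∈ Finset.Ico (2*d+1) (k+1), (l:ℝ)^(2*d) *
              ((n.choose l : ℝ) * ((((n-l).choose (k-l) : ℕ)) : ℝ)^2))
          ≤ ∑ l ∈ Finset.Ico (2*d+1) (k+1), (1/2:ℝ)^l * (T * ((n.choose k : ℕ):ℝ)^2) :=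
            Finset.sum_le_sum hterm
        _ = (∑ l ∈ Finset.Ico (2*d+1) (k+1), (1/2:ℝ)^l) * (T * ((n.choose k : ℕ):ℝ)^2) :=
            (Finset.sum_mul _ _ _).symm
        _ ≤ 1 * (T * ((n.choose k : ℕ):ℝ)^2) := by
            apply mul_le_mul_of_nonneg_right hgeom (by positivity)
        _ = ((n.choose k : ℕ):ℝ)^2 * T := by ring
    calc (∑ S₁ ∈ P, ∑ S₂ ∈ P, (((S₁ ∩ S₂).card : ℝ))^(2*d))
        ≤ ((n.choose k : ℕ):ℝ)^2 * T
          + ∑ l ∈ Finset.Ico (2*d+1) (k+1), (l:ℝ)^(2*d) *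
              ((n.choose l : ℝ) * ((((n-l).choose (k-l) : ℕ)) : ℝ)^2) := by
          rw [← step2]; exact step1
      _ ≤ ((n.choose k : ℕ):ℝ)^2 * T + ((n.choose k : ℕ):ℝ)^2 * T := by linarith [step3]
      _ = ((n.choose k : ℕ):ℝ)^2 * T * 2 := by ring
  -- final assembly
  have hXpos : (0:ℝ) < ((P.card : ℝ)^2 * 2^(2*n)) := by
    rw [hC]; positivity
  calc (k:ℝ)^(2*d) * (((P.card : ℝ)) ^ 2 * 2 ^ (2 * n))⁻¹ *
      (∑ S₁ ∈ P, ∑ S₂ ∈ P, ∑ σ₁ : Fin n → Bool, ∑ σ₂ : Fin n → Bool,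
        (∑ i, (if i ∈ S₁ then (if σ₁ i then (1:ℝ) else -1) / Real.sqrt k else 0) *
              (if i ∈ S₂ then (if σ₂ i then (1:ℝ) else -1) / Real.sqrt k else 0)) ^ (2*d))
      = (((P.card : ℝ)) ^ 2 * 2 ^ (2 * n))⁻¹ * ((k:ℝ)^(2*d) *
        (∑ S₁ ∈ P, ∑ S₂ ∈ P, ∑ σ₁ : Fin n → Bool, ∑ σ₂ : Fin n → Bool,
        (∑ i, (if i ∈ S₁ then (if σ₁ i then (1:ℝ) else -1) / Real.sqrt k else 0) *
              (if i ∈ S₂ then (if σ₂ i then (1:ℝ) else -1) / Real.sqrt k else 0)) ^ (2*d))) := by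
        ring
    _ ≤ (((P.card : ℝ)) ^ 2 * 2 ^ (2 * n))⁻¹ *
        ((2:ℝ)^(2*n) * (((n.choose k : ℕ):ℝ)^2 * T * 2)) := by
        apply mul_le_mul_of_nonneg_left ?_ (inv_nonneg.2 (le_of_lt hXpos))
        exact le_trans hquad (mul_le_mul_of_nonneg_left hsum1 (by positivity))
    _ = 2 * T := by
        rw [hC]
        field_simp
end

section
/- (Key invariant step of SmartScaling.) Let D, D̂ ≻ 0 be n×n diagonal matrices with D̂ ⪰ (1/2)D, let Σ̂ = (1/m)XᵀX with I_n ⪯_{C_n(32k)} D^{-1/2}Σ̂D^{-1/2}, and suppose v ∈ R^n satisfies (D̂^{1/2}v)_i = 1, ‖D̂^{1/2}v‖₁ ≤ 16k, and (1/m)‖Xv‖₂² ≤ 1 for some index i. Then D̂_{ii} ≥ D_{ii}. -/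
open Matrix

/-- Key invariant step of SmartScaling: if D̂ ⪰ D/2, the restricted spectral lower bound
I ⪯_{C(32k)} D^{-1/2} Σ̂ D^{-1/2} holds for Σ̂ = (1/m)XᵀX, and v witnesses a halving at
coordinate i (namely (D̂^{1/2}v)_i = 1, ‖D̂^{1/2}v‖₁ ≤ 16k and (1/m)‖Xv‖₂² ≤ 1), then
D̂_{ii} ≥ D_{ii}. -/
theorem stmt16 {n m k : ℕ} (X : Matrix (Fin m) (Fin n) ℝ)
    (D Dh : Fin n → ℝ) (hD : ∀ i, 0 < D i) (hDh : ∀ i, 0 < Dh i)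
    (hlow : ∀ i, D i / 2 ≤ Dh i)
    (hspec : ∀ u : Fin n → ℝ, (∑ i, |u i|) ≤ 32 * k * ⨆ i, |u i| →
      ∑ i, u i ^ 2 ≤ u ⬝ᵥ ((Matrix.diagonal (fun i => 1/Real.sqrt (D i)) *
        ((1/m : ℝ) • (Xᵀ * X)) *
        Matrix.diagonal (fun i => 1/Real.sqrt (D i))).mulVec u))
    (i : Fin n) (v : Fin n → ℝ)
    (hvi : Real.sqrt (Dh i) * v i = 1)
    (hv1 : ∑ j, Real.sqrt (Dh j) * |v j| ≤ 16 * k)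
    (hXv : (1/m : ℝ) * ∑ j, (X.mulVec v j) ^ 2 ≤ 1) :
    D i ≤ Dh i := by
  by_contra hcon
  push_neg at hcon
  set d : Fin n → ℝ := fun j => 1 / Real.sqrt (D j) with hd
  set u : Fin n → ℝ := fun j => Real.sqrt (D j) * v j with hu
  have hsqD : ∀ j, 0 < Real.sqrt (D j) := fun j => Real.sqrt_pos.2 (hD j)
  have hsqDh : ∀ j, 0 < Real.sqrt (Dh j) := fun j => Real.sqrt_pos.2 (hDh j)
  have hvipos : 0 < v i := by nlinarith [hsqDh i]
  -- sup lower bound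
  have hle : Real.sqrt (Dh i) ≤ Real.sqrt (D i) := Real.sqrt_le_sqrt hcon.le
  have hui : (1:ℝ) ≤ |u i| := by
    have : (1:ℝ) ≤ u i := by simp only [hu]; nlinarith
    calc (1:ℝ) ≤ u i := this
      _ ≤ |u i| := le_abs_self _
  have hsup : (1:ℝ) ≤ ⨆ j, |u j| :=
    hui.trans (le_ciSup (f := fun j => |u j|) (Set.finite_range _).bddAbove i)
  -- l1 bound
  have hsum : ∑ j, |u j| ≤ 32 * k := by
    have hsqrt2 : Real.sqrt 2 ≤ 2 := by
      nlinarith [Real.sq_sqrt (by norm_num : (2:ℝ) ≥ 0), Real.sqrt_nonneg 2]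
    have hterm : ∀ j, |u j| ≤ Real.sqrt 2 * (Real.sqrt (Dh j) * |v j|) := by
      intro j
      have h1 : Real.sqrt (D j) ≤ Real.sqrt 2 * Real.sqrt (Dh j) := by
        rw [← Real.sqrt_mul (by norm_num)]
        exact Real.sqrt_le_sqrt (by nlinarith [hlow j])
      have : |u j| = Real.sqrt (D j) * |v j| := by
        simp [hu, abs_mul, abs_of_nonneg (hsqD j).le]
      rw [this]
      have := abs_nonneg (v j)
      nlinarith
    calc ∑ j, |u j| ≤ ∑ j, Real.sqrt 2 * (Real.sqrt (Dh j) * |v j|) :=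
          Finset.sum_le_sum fun j _ => hterm j
      _ = Real.sqrt 2 * ∑ j, Real.sqrt (Dh j) * |v j| := by rw [Finset.mul_sum]
      _ ≤ 2 * (16 * k) := by
          have h2 : 0 ≤ ∑ j, Real.sqrt (Dh j) * |v j| :=
            Finset.sum_nonneg fun j _ => mul_nonneg (hsqDh j).le (abs_nonneg _)
          nlinarith [Real.sqrt_nonneg 2]
      _ = 32 * k := by ring
  have hcond : ∑ j, |u j| ≤ 32 * k * ⨆ j, |u j| := by
    calc ∑ j, |u j| ≤ 32 * k := hsum
      _ = 32 * k * 1 := by ring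
      _ ≤ 32 * k * ⨆ j, |u j| := by
          apply mul_le_mul_of_nonneg_left hsup; positivity
  have key := hspec u hcond
  -- compute the quadratic form
  have hdu : (Matrix.diagonal d).mulVec u = v := by
    funext j
    simp only [Matrix.mulVec_diagonal, hd, hu]
    field_simp
    exact mul_div_cancel_left₀ (v j) (hsqD j).ne'
  have hform : u ⬝ᵥ ((Matrix.diagonal d * ((1/m : ℝ) • (Xᵀ * X)) *
      Matrix.diagonal d).mulVec u) = (1/m : ℝ) * ∑ j, (X.mulVec v j) ^ 2 := by
    rw [← Matrix.mulVec_mulVec, hdu, ← Matrix.mulVec_mulVec]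
    have h1 : u ⬝ᵥ (Matrix.diagonal d).mulVec (((1/m : ℝ) • (Xᵀ * X)).mulVec v)
        = v ⬝ᵥ ((1/m : ℝ) • (Xᵀ * X)).mulVec v := by
      simp only [dotProduct, Matrix.mulVec_diagonal]
      apply Finset.sum_congr rfl
      intro j _
      simp only [hd, hu]
      field_simp [(hsqD j).ne']
    rw [h1, Matrix.smul_mulVec, dotProduct_smul,
      ← Matrix.mulVec_mulVec, Matrix.dotProduct_mulVec, Matrix.vecMul_transpose]
    simp only [smul_eq_mul, dotProduct]
    congr 1
    apply Finset.sum_congr rfl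
    intro j _
    ring
  rw [hform] at key
  have husq : ∑ j, u j ^ 2 = ∑ j, D j * v j ^ 2 := by
    apply Finset.sum_congr rfl
    intro j _
    simp only [hu, mul_pow, Real.sq_sqrt (hD j).le]
  rw [husq] at key
  have hsingle : D i * v i ^ 2 ≤ ∑ j, D j * v j ^ 2 := by
    apply Finset.single_le_sum (f := fun j => D j * v j ^ 2) _ (Finset.mem_univ i)
    intro j _
    exact mul_nonneg (hD j).le (sq_nonneg _)
  have hDh1 : Dh i * v i ^ 2 = 1 := by
    have := hvi
    nlinarith [Real.sq_sqrt (hDh i).le]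
  have h1 : D i * v i ^ 2 ≤ 1 := hsingle.trans (key.trans hXv)
  nlinarith [mul_pos (sub_pos.2 hcon) (pow_pos hvipos 2)]
end

section
/- Define g: {0,...,k} → R by g(ℓ) = [C(k,ℓ)·C(n−k, k−ℓ)/C(n,k)] · ℓ^{2d}, the product of the hypergeometric probability of intersection size ℓ and ℓ^{2d}. If k ≤ √(n/(4e)) and 2d ≤ ℓ < k, then g(ℓ+1) ≤ g(ℓ)/2. -/
set_option maxHeartbeats 1000000 in
/-- Hypergeometric decay: for g(ℓ) = [C(k,ℓ)C(n−k,k−ℓ)/C(n,k)]·ℓ^{2d}, if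
k ≤ √(n/(4e)) and 2d ≤ ℓ < k then g(ℓ+1) ≤ g(ℓ)/2. -/
theorem stmt19 {n k d ℓ : ℕ} (hk : (k:ℝ) ≤ Real.sqrt (n / (4 * Real.exp 1)))
    (hℓ : 2*d ≤ ℓ) (hℓk : ℓ < k) :
    ((Nat.choose k (ℓ+1) * Nat.choose (n-k) (k-(ℓ+1)) : ℝ) / (Nat.choose n k : ℝ))
        * ((ℓ:ℝ)+1)^(2*d)
      ≤ ((Nat.choose k ℓ * Nat.choose (n-k) (k-ℓ) : ℝ) / (Nat.choose n k : ℝ))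
        * (ℓ:ℝ)^(2*d) / 2 := by
  set e : ℝ := Real.exp 1 with he_def
  have he : (2:ℝ) ≤ e := by
    have := Real.add_one_le_exp (1:ℝ); linarith
  have hk1 : 1 ≤ k := by omega
  have hk1' : (1:ℝ) ≤ (k:ℝ) := by exact_mod_cast hk1
  -- from hk : k ≤ sqrt(n/(4e)) derive 4 e k^2 ≤ n
  have hx : (0:ℝ) ≤ (n:ℝ) / (4 * e) := by positivity
  have hsq : (k:ℝ)^2 ≤ (n:ℝ) / (4 * e) := by
    have h1 : (k:ℝ)^2 ≤ (Real.sqrt ((n:ℝ) / (4 * e)))^2 :=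
      pow_le_pow_left₀ (Nat.cast_nonneg k) hk 2
    rwa [Real.sq_sqrt hx] at h1
  have hn : 4 * e * (k:ℝ)^2 ≤ n := by
    rw [le_div_iff₀ (by positivity)] at hsq; linarith
  -- 2k ≤ n in ℕ
  have hn2kR : (2:ℝ) * k ≤ n := by nlinarith
  have hn2k : 2 * k ≤ n := by exact_mod_cast hn2kR
  have hkn : k ≤ n := by omega
  -- abbreviations
  set a : ℝ := (k.choose ℓ : ℝ) with ha_def
  set b : ℝ := ((n-k).choose (k-ℓ) : ℝ) with hb_def
  set a' : ℝ := (k.choose (ℓ+1) : ℝ) with ha'_def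
  set b' : ℝ := ((n-k).choose (k-(ℓ+1)) : ℝ) with hb'_def
  set P : ℝ := (ℓ:ℝ)^(2*d) with hP_def
  set P' : ℝ := ((ℓ:ℝ)+1)^(2*d) with hP'_def
  have hPnn : 0 ≤ P := by positivity
  -- casting helpers
  have hkl : ((k - ℓ : ℕ) : ℝ) = (k:ℝ) - ℓ := by
    rw [Nat.cast_sub hℓk.le]
  -- identity 1 : a' * (ℓ+1) = a * (k - ℓ)
  have e1 : a' * ((ℓ:ℝ)+1) = a * ((k:ℝ) - ℓ) := by
    have h := Nat.choose_succ_right_eq k ℓ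
    rw [ha'_def, ha_def, ← hkl]
    exact_mod_cast congrArg (Nat.cast : ℕ → ℝ) h
  -- identity 2
  set j : ℕ := k - (ℓ + 1) with hj_def
  set M : ℕ := n - k - j with hM_def
  have hjk : j + 1 = k - ℓ := by omega
  have hMeq : M + 2 * k = n + ℓ + 1 := by omega
  have hMR : (M:ℝ) = (n:ℝ) - 2*k + ℓ + 1 := by
    have h : (M:ℝ) + 2*(k:ℝ) = (n:ℝ) + ℓ + 1 := by exact_mod_cast hMeq
    linarith
  have hM1 : 1 ≤ M := by omega
  have hM1' : (1:ℝ) ≤ (M:ℝ) := by exact_mod_cast hM1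
  have e2 : b * ((k:ℝ) - ℓ) = b' * M := by
    have h := Nat.choose_succ_right_eq (n-k) j
    rw [hjk] at h
    have h2 : (n - k).choose (k - ℓ) * (k - ℓ) = (n-k).choose j * M := by
      rw [h, hM_def]
    rw [hb_def, hb'_def, ← hkl]
    exact_mod_cast congrArg (Nat.cast : ℕ → ℝ) h2
  -- power bound : P' ≤ e * P
  have hpow : P' ≤ e * P := by
    rcases Nat.eq_zero_or_pos d with hd | hd
    · subst hd
      simp only [hP_def, hP'_def, Nat.mul_zero, pow_zero]
      linarith
    · have hℓ2 : 2 ≤ ℓ := by omega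
      have hℓ0 : (0:ℝ) < ℓ := by exact_mod_cast (by omega : 0 < ℓ)
      have h1 : (1 + 1/(ℓ:ℝ)) ≤ Real.exp (1/ℓ) := by
        have := Real.add_one_le_exp (1/(ℓ:ℝ)); linarith
      have h2 : (1 + 1/(ℓ:ℝ))^(2*d) ≤ Real.exp (1/ℓ) ^ (2*d) :=
        pow_le_pow_left₀ (by positivity) h1 _
      have h3 : Real.exp (1/(ℓ:ℝ)) ^ (2*d) = Real.exp ((2*d)/(ℓ:ℝ)) := by
        rw [← Real.exp_nat_mul]; congr 1; push_cast; ring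
      have h5 : Real.exp ((2*d)/(ℓ:ℝ)) ≤ e := by
        apply Real.exp_le_exp.mpr
        rw [div_le_one hℓ0]
        exact_mod_cast hℓ
      have hsplit : ((ℓ:ℝ)+1) = (ℓ:ℝ) * (1 + 1/(ℓ:ℝ)) := by field_simp
      calc P' = (ℓ:ℝ)^(2*d) * (1 + 1/(ℓ:ℝ))^(2*d) := by
                rw [hP'_def, hsplit, mul_pow]
        _ ≤ (ℓ:ℝ)^(2*d) * e := by
                have := h2.trans (le_of_eq h3) |>.trans h5
                exact mul_le_mul_of_nonneg_left this (by positivity)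
        _ = e * P := by rw [hP_def]; ring
  -- arithmetic bound : 2 e (k-ℓ)^2 ≤ (ℓ+1) M
  have hℓ0' : (0:ℝ) ≤ (ℓ:ℝ) := Nat.cast_nonneg ℓ
  have hℓk' : (ℓ:ℝ) < k := by exact_mod_cast hℓk
  have harith : 2 * e * ((k:ℝ) - ℓ)^2 ≤ ((ℓ:ℝ)+1) * M := by
    have hkl2 : ((k:ℝ) - ℓ)^2 ≤ (k:ℝ)^2 := by nlinarith [hℓ0', hℓk']
    have hMlb : (n:ℝ) - 2*k + 1 ≤ (M:ℝ) := by rw [hMR]; linarith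
    have hkk : (k:ℝ) ≤ (k:ℝ)^2 := by nlinarith [hk1']
    have hek : 4*(k:ℝ)^2 ≤ 2*e*(k:ℝ)^2 := by
      have := mul_le_mul_of_nonneg_right (show (4:ℝ) ≤ 2*e by linarith) (sq_nonneg (k:ℝ))
      linarith
    have h2ek : 2 * e * (k:ℝ)^2 ≤ (n:ℝ) - 2*k + 1 := by linarith
    have hMnn : (0:ℝ) ≤ (M:ℝ) := by linarith
    have hlM : 0 ≤ (ℓ:ℝ) * M := mul_nonneg hℓ0' hMnn
    have hmono : 2 * e * ((k:ℝ) - ℓ)^2 ≤ 2 * e * (k:ℝ)^2 := by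
      apply mul_le_mul_of_nonneg_left hkl2; linarith
    have : ((ℓ:ℝ)+1) * M = (ℓ:ℝ)*M + M := by ring
    linarith
  -- main inequality
  have main : 2 * (a' * b' * P') ≤ a * b * P := by
    have hpos : (0:ℝ) < ((ℓ:ℝ)+1) * M := by positivity
    have habnn : 0 ≤ a * b := by positivity
    have step : 2 * (a' * b' * P') * (((ℓ:ℝ)+1) * M) ≤ a * b * P * (((ℓ:ℝ)+1) * M) := by
      have lhs_eq : 2 * (a' * b' * P') * (((ℓ:ℝ)+1) * M)
          = 2 * (a' * ((ℓ:ℝ)+1)) * (b' * M) * P' := by ring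
      have key : 2 * (a * b * ((k:ℝ)-ℓ)^2) * P' ≤ a * b * P * (((ℓ:ℝ)+1) * M) := by
        calc 2 * (a * b * ((k:ℝ)-ℓ)^2) * P' ≤ 2 * (a * b * ((k:ℝ)-ℓ)^2) * (e * P) := by
              apply mul_le_mul_of_nonneg_left hpow
              positivity
          _ = (2 * e * ((k:ℝ)-ℓ)^2) * (a * b) * P := by ring
          _ ≤ (((ℓ:ℝ)+1) * M) * (a * b) * P := by
              apply mul_le_mul_of_nonneg_right _ hPnn
              exact mul_le_mul_of_nonneg_right harith habnn
          _ = a * b * P * (((ℓ:ℝ)+1) * M) := by ring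
      calc 2 * (a' * b' * P') * (((ℓ:ℝ)+1) * M)
          = 2 * (a' * ((ℓ:ℝ)+1)) * (b' * M) * P' := lhs_eq
        _ = 2 * (a * ((k:ℝ)-ℓ)) * (b * ((k:ℝ)-ℓ)) * P' := by rw [e1, ← e2]
        _ = 2 * (a * b * ((k:ℝ)-ℓ)^2) * P' := by ring
        _ ≤ a * b * P * (((ℓ:ℝ)+1) * M) := key
    exact le_of_mul_le_mul_right step hpos
  -- conclude
  have hC : (0:ℝ) < (n.choose k : ℝ) := by exact_mod_cast Nat.choose_pos hkn
  rw [div_mul_eq_mul_div, div_mul_eq_mul_div, div_div, div_le_div_iff₀ hC (by positivity)]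
  push_cast
  nlinarith [mul_le_mul_of_nonneg_right main hC.le]
end
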